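/- arXiv:math/0210051 — 2 statements merged into one kernel-verified Lean document; each statement's English description precedes it below -/
import Mathlib

section
/- Let n ≥ 5 be odd and let the configuration consist of the n vertices of a regular n-gon and its center C. For any two adjacent vertices P,Q of the n-gon, n(P,Q) = 1: the unique separating line spanned by two other points of the configuration passes through the center. -/
open scoped Classical

noncomputable section

/-- Orientation determinant of two vectors in the plane. -/
def det2 (u v : ℝ × ℝ) : ℝ := u.1 * v.2 - u.2 * v.1

/-- The line through `A` and `B` separates the points `P` and `Q`
(they lie in distinct open half-planes determined by the line). -/
def SepLine (A B P Q : ℝ × ℝ) : Prop :=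
  det2 (B - A) (P - A) * det2 (B - A) (Q - A) < 0

/-- A finite planar point set is a generic configuration if no three of its
points are collinear. -/
def Generic (C : Finset (ℝ × ℝ)) : Prop :=
  ∀ a ∈ C, ∀ b ∈ C, ∀ c ∈ C, a ≠ b → a ≠ c → b ≠ c →
    ¬ Collinear ℝ ({a, b, c} : Set (ℝ × ℝ))

/-- `nsep C P Q` is the number of lines spanned by (unordered) pairs of points of
`C \ {P,Q}` that separate `P` from `Q`. -/
def nsep (C : Finset (ℝ × ℝ)) (P Q : ℝ × ℝ) : ℕ :=
  (((C \ {P, Q}).powersetCard 2).filter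
    (fun s => ∃ A ∈ s, ∃ B ∈ s, A ≠ B ∧ SepLine A B P Q)).card

/-- The Orchard relation: `P ∼ Q` iff `n(P,Q) ≡ n - 3 (mod 2)` where `n = |C|`. -/
def Orchard (C : Finset (ℝ × ℝ)) (P Q : ℝ × ℝ) : Prop :=
  (nsep C P Q : ℤ) ≡ (C.card : ℤ) - 3 [ZMOD 2]

/-- A configuration is monochromatic if all its points are Orchard-equivalent. -/
def Mono (C : Finset (ℝ × ℝ)) : Prop :=
  ∀ P ∈ C, ∀ Q ∈ C, P ≠ Q → Orchard C P Q

/-- A configuration is in convex position if each of its points is a vertex of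
the convex hull. -/
def ConvexPos (C : Finset (ℝ × ℝ)) : Prop :=
  ∀ P ∈ C, P ∉ convexHull ℝ ((C : Set (ℝ × ℝ)) \ {P})

/-- The `k`-th vertex of the regular `n`-gon inscribed in the unit circle
centered at the origin. -/
def vtx (n : ℕ) (k : Fin n) : ℝ × ℝ :=
  (Real.cos (2 * Real.pi * k / n), Real.sin (2 * Real.pi * k / n))

/-- The configuration consisting of the vertices of the regular `n`-gon together
with its barycenter (the origin). -/
def ngonWithCenter (n : ℕ) : Finset (ℝ × ℝ) :=
  insert ((0, 0) : ℝ × ℝ) (Finset.image (vtx n) Finset.univ)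

/-!
Place vertex `j` at angle `2πj/n` on the unit circle. For points at angles `2a, 2b, 2p` of the
unit circle the orientation determinant is `4 sin (b - a) sin (p - b) sin (p - a)`, so a chord
joining two vertices other than `P, Q` never separates them: the adjacent vertices `P, Q` lie on
one arc cut out by the chord. Relative to the line through the center and vertex `i`, vertex `k`
has orientation `sin (2π (k - i) / n)`; for `n = 2m + 1` this sign changes between `k` and `k + 1`
exactly when `k - i ≡ m (mod n)`, i.e. for the single vertex opposite the edge `PQ`.
-/

open Real

lemma sin_two_mul_add_sin_two_mul_sub_sin_two_mul_add (u v : ℝ) :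
    sin (2 * u) + sin (2 * v) - sin (2 * (u + v)) = 4 * sin u * sin v * sin (u + v) := by
  simp only [sin_two_mul, cos_add, sin_add]
  linear_combination (-2 * sin u * cos u) * sin_sq_add_cos_sq v
    - 2 * sin v * cos v * sin_sq_add_cos_sq u

lemma det2_sub_cos_sin_two_mul (a b p : ℝ) :
    det2 ((cos (2 * b), sin (2 * b)) - (cos (2 * a), sin (2 * a)))
        ((cos (2 * p), sin (2 * p)) - (cos (2 * a), sin (2 * a))) =
      4 * sin (b - a) * sin (p - b) * sin (p - a) := by
  have h := sin_two_mul_add_sin_two_mul_sub_sin_two_mul_add (b - a) (p - b)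
  rw [sub_add_sub_cancel', mul_sub, mul_sub, mul_sub, sin_sub, sin_sub, sin_sub] at h
  rw [← h]
  simp only [det2, Prod.fst_sub, Prod.snd_sub]
  ring

lemma det2_cos_sin_two_mul (a p : ℝ) :
    det2 ((cos (2 * a), sin (2 * a)) - (0, 0)) ((cos (2 * p), sin (2 * p)) - (0, 0)) =
      sin (2 * (p - a)) := by
  simp only [det2, Prod.fst_sub, Prod.snd_sub, sub_zero, mul_sub, sin_sub]
  ring

lemma SepLine.symm {A B P Q : ℝ × ℝ} (h : SepLine A B P Q) : SepLine B A P Q := by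
  unfold SepLine det2 at *
  simp only [Prod.fst_sub, Prod.snd_sub] at *
  linarith

lemma SepLine.left_ne_right {A B P Q : ℝ × ℝ} (h : SepLine A B P Q) : A ≠ B := by
  rintro rfl
  simp [SepLine, det2] at h

lemma SepLine.left_notMem {A B P Q : ℝ × ℝ} (h : SepLine A B P Q) :
    A ∉ ({P, Q} : Finset (ℝ × ℝ)) := by
  rw [Finset.mem_insert, Finset.mem_singleton]
  rintro (rfl | rfl) <;> simp [SepLine, det2] at h

lemma nsep_eq_one {C : Finset (ℝ × ℝ)} {P Q O X : ℝ × ℝ} (hO : O ∈ C) (hX : X ∈ C)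
    (hsep : SepLine O X P Q)
    (huniq : ∀ A ∈ C \ {P, Q}, ∀ B ∈ C \ {P, Q}, A ≠ B → SepLine A B P Q →
      ({A, B} : Finset (ℝ × ℝ)) = {O, X}) :
    nsep C P Q = 1 := by
  rw [nsep, Finset.card_eq_one]
  refine ⟨{O, X}, Finset.eq_singleton_iff_unique_mem.mpr ⟨?_, ?_⟩⟩
  · rw [Finset.mem_filter, Finset.mem_powersetCard, Finset.insert_subset_iff,
      Finset.singleton_subset_iff, Finset.mem_sdiff, Finset.mem_sdiff]
    exact ⟨⟨⟨⟨hO, hsep.left_notMem⟩, hX, hsep.symm.left_notMem⟩,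
      Finset.card_pair hsep.left_ne_right⟩, O, by simp, X, by simp, hsep.left_ne_right, hsep⟩
  · rintro s hs
    rw [Finset.mem_filter, Finset.mem_powersetCard] at hs
    obtain ⟨⟨hsC, hcard⟩, A, hA, B, hB, hAB, hsepAB⟩ := hs
    rw [← huniq A (hsC hA) B (hsC hB) hAB hsepAB]
    refine (Finset.eq_of_subset_of_card_le ?_ ?_).symm
    · exact Finset.insert_subset hA (Finset.singleton_subset_iff.mpr hB)
    · rw [hcard, Finset.card_pair hAB]

lemma Fin.val_add_one_modEq {n : ℕ} [NeZero n] (k : Fin n) :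
    ((k + 1 : Fin n) : ℤ) ≡ k + 1 [ZMOD n] := by
  have : ((k + 1 : Fin n) : ℕ) ≡ k + 1 [MOD n] := by
    rw [Fin.val_add, Fin.val_one']
    exact (Nat.mod_modEq _ _).trans ((Nat.mod_modEq _ _).add_left _)
  exact_mod_cast Int.natCast_modEq_iff.mpr this

lemma Fin.eq_of_val_modEq {n : ℕ} {i j : Fin n} (h : (i : ℤ) ≡ j [ZMOD n]) : i = j := by
  have hi : ((i : ℤ) % n) = i := Int.emod_eq_of_lt (by positivity) (by exact_mod_cast i.isLt)
  have hj : ((j : ℤ) % n) = j := Int.emod_eq_of_lt (by positivity) (by exact_mod_cast j.isLt)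
  ext
  exact_mod_cast hi.symm.trans (h.eq.trans hj)

lemma Fin.exists_val_modEq {n : ℕ} [NeZero n] (a : ℤ) : ∃ i : Fin n, (i : ℤ) ≡ a [ZMOD n] := by
  have hn : (0 : ℤ) < n := by exact_mod_cast Nat.pos_of_neZero n
  refine ⟨⟨(a % n).toNat, by have := Int.emod_lt_of_pos a hn; omega⟩, ?_⟩
  simp only [Int.toNat_of_nonneg (Int.emod_nonneg a hn.ne')]
  exact Int.mod_modEq a n

lemma two_mul_pi_mul_div_eq_add_of_modEq {n : ℕ} [NeZero n] {a b : ℤ} (h : a ≡ b [ZMOD n]) :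
    ∃ t : ℤ, 2 * (π * b / n) = 2 * (π * a / n) + t * (2 * π) := by
  obtain ⟨t, ht⟩ := h.dvd
  refine ⟨t, ?_⟩
  have hb : (b : ℝ) = a + n * t := by exact_mod_cast (by linarith : b = a + n * t)
  have hn : (n : ℝ) ≠ 0 := Nat.cast_ne_zero.mpr (NeZero.ne n)
  rw [hb]
  field_simp

lemma sin_two_mul_pi_mul_div_congr {n : ℕ} [NeZero n] {a b : ℤ} (h : a ≡ b [ZMOD n]) :
    sin (2 * (π * a / n)) = sin (2 * (π * b / n)) := by
  obtain ⟨t, ht⟩ := two_mul_pi_mul_div_eq_add_of_modEq h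
  rw [ht, sin_add_int_mul_two_pi]

/-- Lets `vtx n (k + 1)` sit at angle `2π (k + 1) / n` even when `k + 1` wraps around to `0`. -/
lemma vtx_eq_of_modEq {n : ℕ} [NeZero n] (k : Fin n) {j : ℤ} (h : (k : ℤ) ≡ j [ZMOD n]) :
    vtx n k = (cos (2 * (π * j / n)), sin (2 * (π * j / n))) := by
  obtain ⟨t, ht⟩ := two_mul_pi_mul_div_eq_add_of_modEq h
  rw [ht, cos_add_int_mul_two_pi, sin_add_int_mul_two_pi, vtx]
  push_cast
  ring_nf

lemma sin_pi_mul_div_pos {n x : ℝ} (hx : 0 < x) (hxn : x < n) : 0 < sin (π * x / n) := by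
  apply sin_pos_of_pos_of_lt_pi (div_pos (mul_pos pi_pos hx) (hx.trans hxn))
  rw [div_lt_iff₀ (hx.trans hxn)]
  nlinarith [pi_pos]

lemma sin_pi_mul_div_neg {n x : ℝ} (hx : -n < x) (hxn : x < 0) : sin (π * x / n) < 0 := by
  have := sin_pi_mul_div_pos (neg_pos.mpr hxn) (neg_lt.mp hx)
  rwa [mul_neg, neg_div, sin_neg, neg_pos] at this

lemma sin_pi_mul_div_mul_sin_pi_mul_add_one_div_pos {n x : ℝ}
    (h : 0 < x ∧ x + 1 < n ∨ -n < x ∧ x + 1 < 0) :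
    0 < sin (π * x / n) * sin (π * (x + 1) / n) := by
  rcases h with ⟨hx, hxn⟩ | ⟨hx, hxn⟩
  · exact mul_pos (sin_pi_mul_div_pos hx (by linarith)) (sin_pi_mul_div_pos (by linarith) hxn)
  · exact mul_pos_of_neg_of_neg (sin_pi_mul_div_neg hx (by linarith))
      (sin_pi_mul_div_neg (by linarith) hxn)

lemma Fin.sub_bounds_of_ne_of_ne_add_one {n : ℕ} [NeZero n] {k i : Fin n} (hk : i ≠ k)
    (hk' : i ≠ k + 1) :
    0 < (k - i : ℤ) ∧ (k - i : ℤ) + 1 < n ∨ -n < (k - i : ℤ) ∧ (k - i : ℤ) + 1 < 0 := by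
  have hne : (i : ℤ) ≠ k := fun h => hk (Fin.ext (by exact_mod_cast h))
  have hne' : ∀ c : ℤ, c = 0 ∨ c = n → (i : ℤ) + c ≠ k + 1 := by
    rintro c hc h
    refine hk' (Fin.eq_of_val_modEq ((Fin.val_add_one_modEq k).trans ?_).symm)
    rw [← h]
    rcases hc with rfl | rfl
    · simp [Int.ModEq.refl]
    · exact Int.add_modEq_right
  have := hne' 0 (.inl rfl)
  have := hne' n (.inr rfl)
  have := i.isLt
  have := k.isLt
  omega

lemma not_sepLine_vtx_adjacent {n : ℕ} [NeZero n] {k i j : Fin n} (hi : i ≠ k) (hi' : i ≠ k + 1)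
    (hj : j ≠ k) (hj' : j ≠ k + 1) :
    ¬ SepLine (vtx n i) (vtx n j) (vtx n k) (vtx n (k + 1)) := by
  rw [vtx_eq_of_modEq i .rfl, vtx_eq_of_modEq j .rfl, vtx_eq_of_modEq k .rfl,
    vtx_eq_of_modEq (k + 1) (Fin.val_add_one_modEq k)]
  unfold SepLine
  rw [det2_sub_cos_sin_two_mul, det2_sub_cos_sin_two_mul, not_lt]
  have arc : ∀ {t : Fin n}, t ≠ k → t ≠ k + 1 → 0 < sin (π * k / n - π * t / n) *
      sin (π * ((k : ℤ) + 1 : ℤ) / n - π * t / n) := by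
    intro t ht ht'
    have := sin_pi_mul_div_mul_sin_pi_mul_add_one_div_pos (n := n) (x := ((k - t : ℤ) : ℝ))
      (by exact_mod_cast Fin.sub_bounds_of_ne_of_ne_add_one ht ht')
    convert this using 3 <;> push_cast <;> ring
  have key := mul_nonneg (mul_nonneg (sq_nonneg (4 * sin (π * j / n - π * i / n)))
    (arc hi hi').le) (arc hj hj').le
  convert key using 1
  push_cast
  ring

lemma sin_two_mul_pi_mul_div_pos {n x : ℝ} (hx : 0 < x) (hxn : 2 * x < n) :
    0 < sin (2 * (π * x / n)) := by
  have := sin_pi_mul_div_pos (by linarith) hxn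
  rwa [mul_left_comm, mul_div_assoc] at this

lemma sin_two_mul_pi_mul_div_neg {n x : ℝ} (hxn : n < 2 * x) (hx : x < n) :
    sin (2 * (π * x / n)) < 0 := by
  have hn : n ≠ 0 := by linarith
  have := sin_pi_mul_div_neg (n := n) (x := 2 * x - 2 * n) (by linarith) (by linarith)
  rwa [show π * (2 * x - 2 * n) / n = 2 * (π * x / n) - 2 * π by field_simp,
    sin_sub_two_pi] at this

lemma sin_mul_sin_neg_iff_of_nonneg_of_lt {m : ℕ} (hm : 0 < m) {r : ℤ} (hr : 0 ≤ r)
    (hrn : r < 2 * m + 1) :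
    sin (2 * (π * r / (2 * m + 1 : ℕ))) * sin (2 * (π * (r + 1 : ℤ) / (2 * m + 1 : ℕ))) < 0 ↔
      r = m := by
  have hm' : (1 : ℝ) ≤ m := by exact_mod_cast hm
  push_cast
  rcases (show r = 0 ∨ 0 < r ∧ r < m ∨ r = m ∨ m < r ∧ r < 2 * m ∨ r = 2 * m by omega) with
    rfl | ⟨h0, h1⟩ | rfl | ⟨h0, h1⟩ | rfl
  · simp only [Int.cast_zero, mul_zero, zero_div, sin_zero, zero_mul, lt_self_iff_false,
      false_iff]
    omega
  · have h0 : (0 : ℝ) < r := by exact_mod_cast h0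
    have h1 : (r : ℝ) + 1 ≤ m := by exact_mod_cast h1
    simp only [show r ≠ m by omega, iff_false, not_lt]
    exact (mul_pos (sin_two_mul_pi_mul_div_pos h0 (by linarith))
      (sin_two_mul_pi_mul_div_pos (by linarith) (by linarith))).le
  · simp only [iff_true, Int.cast_natCast]
    exact mul_neg_of_pos_of_neg (sin_two_mul_pi_mul_div_pos (by linarith) (by linarith))
      (sin_two_mul_pi_mul_div_neg (by linarith) (by linarith))
  · have h0 : (m : ℝ) + 1 ≤ r := by exact_mod_cast h0
    have h1 : (r : ℝ) < 2 * m := by exact_mod_cast h1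
    simp only [show r ≠ m by omega, iff_false, not_lt]
    exact (mul_pos_of_neg_of_neg (sin_two_mul_pi_mul_div_neg (by linarith) (by linarith))
      (sin_two_mul_pi_mul_div_neg (by linarith) (by linarith))).le
  · have : 2 * (π * ((2 * m : ℤ) + 1 : ℝ) / (2 * m + 1)) = 2 * π := by
      push_cast; field_simp
    simp only [this, sin_two_pi, mul_zero, lt_self_iff_false, false_iff]
    omega

lemma sin_mul_sin_neg_iff_modEq {m : ℕ} (hm : 0 < m) (d : ℤ) :
    sin (2 * (π * d / (2 * m + 1 : ℕ))) * sin (2 * (π * (d + 1 : ℤ) / (2 * m + 1 : ℕ))) < 0 ↔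
      d ≡ m [ZMOD (2 * m + 1 : ℕ)] := by
  have hd := Int.mod_modEq d (2 * m + 1 : ℕ)
  have hn : (0 : ℤ) < (2 * m + 1 : ℕ) := by positivity
  rw [← sin_two_mul_pi_mul_div_congr hd, ← sin_two_mul_pi_mul_div_congr (hd.add_right 1),
    sin_mul_sin_neg_iff_of_nonneg_of_lt hm (Int.emod_nonneg d hn.ne')
      (by exact_mod_cast Int.emod_lt_of_pos d hn),
    Int.ModEq, Int.emod_eq_of_lt (a := m) (by positivity) (by omega)]

lemma sepLine_origin_vtx_iff {m : ℕ} (hm : 0 < m) (k i : Fin (2 * m + 1)) :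
    SepLine (0, 0) (vtx _ i) (vtx _ k) (vtx _ (k + 1)) ↔
      (k - i : ℤ) ≡ m [ZMOD (2 * m + 1 : ℕ)] := by
  rw [vtx_eq_of_modEq i .rfl, vtx_eq_of_modEq k .rfl,
    vtx_eq_of_modEq (k + 1) (Fin.val_add_one_modEq k), SepLine, det2_cos_sin_two_mul,
    det2_cos_sin_two_mul, ← sin_mul_sin_neg_iff_modEq hm]
  push_cast
  ring_nf

lemma existsUnique_sepLine_origin_vtx {m : ℕ} (hm : 0 < m) (k : Fin (2 * m + 1)) :
    ∃! i : Fin (2 * m + 1), SepLine (0, 0) (vtx _ i) (vtx _ k) (vtx _ (k + 1)) := by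
  simp only [sepLine_origin_vtx_iff hm]
  obtain ⟨i, hi⟩ := Fin.exists_val_modEq (n := 2 * m + 1) (k - m)
  refine ⟨i, by simpa using (Int.ModEq.refl (k : ℤ)).sub hi, fun j hj => ?_⟩
  refine Fin.eq_of_val_modEq (Int.ModEq.trans ?_ hi.symm)
  simpa using (Int.ModEq.refl (k : ℤ)).sub hj

lemma mem_ngonWithCenter {n : ℕ} {A : ℝ × ℝ} :
    A ∈ ngonWithCenter n ↔ A = (0, 0) ∨ ∃ i, vtx n i = A := by
  simp [ngonWithCenter]

lemma eq_origin_of_sepLine_adjacent {n : ℕ} [NeZero n] (k : Fin n) :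
    ∀ A ∈ ngonWithCenter n, ∀ B ∈ ngonWithCenter n,
      A ≠ vtx n k → A ≠ vtx n (k + 1) → B ≠ vtx n k → B ≠ vtx n (k + 1) →
      SepLine A B (vtx n k) (vtx n (k + 1)) → A = (0, 0) ∨ B = (0, 0) := by
  intro A hA B hB hAk hAk' hBk hBk' hsep
  rw [mem_ngonWithCenter] at hA hB
  rcases hA with hA | ⟨i, rfl⟩
  · exact .inl hA
  rcases hB with hB | ⟨j, rfl⟩
  · exact .inr hB
  exact absurd hsep (not_sepLine_vtx_adjacent (ne_of_apply_ne _ hAk) (ne_of_apply_ne _ hAk')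
    (ne_of_apply_ne _ hBk) (ne_of_apply_ne _ hBk'))

/-- For odd `n ≥ 5`, two adjacent vertices `P,Q` of the regular `n`-gon with its
center satisfy `n(P,Q) = 1`, and any separating line spanned by two other points
of the configuration passes through the center. -/
theorem adjacent_vertices_ngon_center (n : ℕ) [NeZero n] (hn : 5 ≤ n) (hodd : Odd n)
    (k : Fin n) :
    nsep (ngonWithCenter n) (vtx n k) (vtx n (k + 1)) = 1 ∧
    ∀ A ∈ ngonWithCenter n, ∀ B ∈ ngonWithCenter n, A ≠ B →
      A ≠ vtx n k → A ≠ vtx n (k + 1) → B ≠ vtx n k → B ≠ vtx n (k + 1) →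
      SepLine A B (vtx n k) (vtx n (k + 1)) → A = (0, 0) ∨ B = (0, 0) := by
  obtain ⟨m, rfl⟩ := hodd
  have hcenter := eq_origin_of_sepLine_adjacent k
  obtain ⟨i₀, hsep₀, huniq₀⟩ := existsUnique_sepLine_origin_vtx (by omega) k
  refine ⟨nsep_eq_one (mem_ngonWithCenter.mpr (.inl rfl))
    (mem_ngonWithCenter.mpr (.inr ⟨i₀, rfl⟩)) hsep₀ ?_, fun A hA B hB _ => hcenter A hA B hB⟩
  intro A hA B hB hAB hsep
  simp only [Finset.mem_sdiff, Finset.mem_insert, Finset.mem_singleton, not_or] at hA hB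
  rcases hcenter A hA.1 B hB.1 hA.2.1 hA.2.2 hB.2.1 hB.2.2 hsep with rfl | rfl
  · obtain ⟨j, rfl⟩ := (mem_ngonWithCenter.mp hB.1).resolve_left hAB.symm
    rw [huniq₀ j hsep]
  · obtain ⟨j, rfl⟩ := (mem_ngonWithCenter.mp hA.1).resolve_left hAB
    rw [huniq₀ j hsep.symm, Finset.pair_comm]
end
end

section
/- Let P be a monochromatic generic configuration containing two infinitesimally-close points P and Q that are both vertices of the convex hull of P. Then P∖{P,Q} is also monochromatic. -/
open scoped Classical

noncomputable section

set_option maxHeartbeats 1000000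


lemma sepLine_comm (A B R S : ℝ × ℝ) : SepLine B A R S ↔ SepLine A B R S := by
  unfold SepLine
  have h : det2 (A - B) (R - B) * det2 (A - B) (S - B)
      = det2 (B - A) (R - A) * det2 (B - A) (S - A) := by simp [det2]; ring
  rw [h]

lemma collinear_of_det2_eq_zero (a b c : ℝ × ℝ) (h : det2 (b - a) (c - a) = 0) :
    Collinear ℝ ({a, b, c} : Set (ℝ × ℝ)) := by
  by_cases hba : b = a
  · have he : ({a, b, c} : Set (ℝ × ℝ)) = {a, c} := by rw [hba]; simp [Set.insert_comm]
    rw [he]; exact collinear_pair ℝ a c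
  · have hmem : a ∈ ({a, b, c} : Set (ℝ × ℝ)) := by simp
    rw [collinear_iff_of_mem hmem]
    have hex : ∃ t : ℝ, c - a = t • (b - a) := by
      have h' : (b-a).1 * (c-a).2 - (b-a).2 * (c-a).1 = 0 := h
      by_cases h1 : (b - a).1 = 0
      · have h2 : (b - a).2 ≠ 0 := by
          intro h2
          exact hba (sub_eq_zero.mp (Prod.ext h1 h2))
        have h3 : (b - a).2 * (c - a).1 = 0 := by rw [h1] at h'; linarith
        have hc1 : (c - a).1 = 0 := (mul_eq_zero.mp h3).resolve_left h2
        refine ⟨(c - a).2 / (b - a).2, ?_⟩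
        apply Prod.ext
        · simp only [Prod.smul_fst, smul_eq_mul, h1, mul_zero]; exact hc1
        · simp only [Prod.smul_snd, smul_eq_mul]
          rw [div_mul_cancel₀ _ h2]
      · refine ⟨(c - a).1 / (b - a).1, ?_⟩
        apply Prod.ext
        · simp only [Prod.smul_fst, smul_eq_mul]
          rw [div_mul_cancel₀ _ h1]
        · simp only [Prod.smul_snd, smul_eq_mul]
          rw [div_mul_eq_mul_div, eq_div_iff h1]
          nlinarith [h']
    obtain ⟨t, ht⟩ := hex
    refine ⟨b - a, ?_⟩
    intro p hp
    simp only [Set.mem_insert_iff, Set.mem_singleton_iff] at hp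
    rcases hp with rfl | rfl | rfl
    · exact ⟨0, by simp⟩
    · exact ⟨1, by simp⟩
    · exact ⟨t, by rw [vadd_eq_add, ← ht]; abel⟩

lemma mem_hull3 (x p q r : ℝ × ℝ) (α β γ : ℝ) (hα : 0 ≤ α) (hβ : 0 ≤ β) (hγ : 0 ≤ γ)
    (hs : 0 < α + β + γ)
    (h1 : (α + β + γ) * x.1 = α * p.1 + β * q.1 + γ * r.1)
    (h2 : (α + β + γ) * x.2 = α * p.2 + β * q.2 + γ * r.2) :
    x ∈ convexHull ℝ ({p, q, r} : Set (ℝ × ℝ)) := by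
  have hmem := Finset.centerMass_mem_convexHull (s := ({p, q, r} : Set (ℝ × ℝ)))
    (Finset.univ : Finset (Fin 3)) (w := ![α, β, γ])
    (by intro i _; fin_cases i <;> simpa)
    (by simpa [Fin.sum_univ_three] using hs)
    (z := ![p, q, r]) (by intro i _; fin_cases i <;> simp)
  have hx : (Finset.univ : Finset (Fin 3)).centerMass ![α, β, γ] ![p, q, r] = x := by
    rw [Finset.centerMass]
    simp only [Fin.sum_univ_three, Matrix.cons_val_zero, Matrix.cons_val_one, Matrix.head_cons,
      Matrix.cons_val_two, Matrix.tail_cons]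
    have hne : α + β + γ ≠ 0 := ne_of_gt hs
    apply Prod.ext
    · simp only [Prod.smul_fst, smul_eq_mul, Prod.fst_add]
      rw [inv_mul_eq_div, div_eq_iff hne]
      nlinarith [h1]
    · simp only [Prod.smul_snd, smul_eq_mul, Prod.snd_add]
      rw [inv_mul_eq_div, div_eq_iff hne]
      nlinarith [h2]
  rwa [hx] at hmem

lemma cross_sign (a1 a2 b1 b2 : ℝ) (h1 : 0 < a1 * b1) (h2 : 0 < a2 * b2) :
    a1 * a2 < 0 ↔ b1 * b2 < 0 := by
  constructor <;> intro h <;> by_contra hc <;> push_neg at hc <;>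
    nlinarith [mul_pos h1 h2, mul_nonneg hc hc]

/-- If a monochromatic generic configuration contains two infinitesimally-close
points `P, Q` that are both vertices of its convex hull, then deleting them
leaves a monochromatic configuration. -/
theorem delete_close_hull_pair_mono (C : Finset (ℝ × ℝ)) (hC : Generic C)
    (hmono : Mono C) (P Q : ℝ × ℝ) (hP : P ∈ C) (hQ : Q ∈ C) (hPQ : P ≠ Q)
    (hclose : nsep C P Q = 0)
    (hPhull : P ∉ convexHull ℝ ((C : Set (ℝ × ℝ)) \ {P}))
    (hQhull : Q ∉ convexHull ℝ ((C : Set (ℝ × ℝ)) \ {Q})) :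
    Mono (C \ {P, Q}) := by
  have hdet : ∀ a ∈ C, ∀ b ∈ C, ∀ c ∈ C, a ≠ b → a ≠ c → b ≠ c →
      det2 (b - a) (c - a) ≠ 0 := fun a ha b hb c hc hab hac hbc h =>
    hC a ha b hb c hc hab hac hbc (collinear_of_det2_eq_zero a b c h)
  -- no line through two other points separates P from Q
  have hnosep : ∀ X ∈ C \ ({P, Q} : Finset (ℝ × ℝ)), ∀ Y ∈ C \ ({P, Q} : Finset (ℝ × ℝ)),
      X ≠ Y → ¬ SepLine X Y P Q := by
    intro X hX Y hY hXY hsep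
    have hfe : (((C \ {P, Q}).powersetCard 2).filter
        (fun s => ∃ A ∈ s, ∃ B ∈ s, A ≠ B ∧ SepLine A B P Q)) = ∅ :=
      Finset.card_eq_zero.mp hclose
    have hmemp : ({X, Y} : Finset (ℝ × ℝ)) ∈ (C \ ({P, Q} : Finset (ℝ × ℝ))).powersetCard 2 := by
      rw [Finset.mem_powersetCard]
      refine ⟨?_, ?_⟩
      · intro z hz
        simp only [Finset.mem_insert, Finset.mem_singleton] at hz
        rcases hz with rfl | rfl
        · exact hX
        · exact hY
      · rw [Finset.card_insert_of_notMem (by simpa using hXY), Finset.card_singleton]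
    have hmf : ({X, Y} : Finset (ℝ × ℝ)) ∈ (((C \ {P, Q}).powersetCard 2).filter
        (fun s => ∃ A ∈ s, ∃ B ∈ s, A ≠ B ∧ SepLine A B P Q)) :=
      Finset.mem_filter.mpr ⟨hmemp, ⟨X, by simp, Y, by simp, hXY, hsep⟩⟩
    rw [hfe] at hmf
    exact absurd hmf (Finset.notMem_empty _)
  -- strict positivity of the product of signs
  have hpos : ∀ X ∈ C \ ({P, Q} : Finset (ℝ × ℝ)), ∀ Y ∈ C \ ({P, Q} : Finset (ℝ × ℝ)),
      X ≠ Y → 0 < det2 (Y - X) (P - X) * det2 (Y - X) (Q - X) := by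
    intro X hX Y hY hXY
    have h1 := hnosep X hX Y hY hXY
    unfold SepLine at h1
    obtain ⟨hXC, hXpq⟩ := Finset.mem_sdiff.mp hX
    obtain ⟨hYC, hYpq⟩ := Finset.mem_sdiff.mp hY
    simp only [Finset.mem_insert, Finset.mem_singleton, not_or] at hXpq hYpq
    have hne1 : det2 (Y - X) (P - X) ≠ 0 := hdet X hXC Y hYC P hP hXY hXpq.1 hYpq.1
    have hne2 : det2 (Y - X) (Q - X) ≠ 0 := hdet X hXC Y hYC Q hQ hXY hXpq.2 hYpq.2
    exact lt_of_le_of_ne (not_lt.mp h1) (Ne.symm (mul_ne_zero hne1 hne2))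
  -- the pair-predicate simplification
  have hpairpred : ∀ (A B R S : ℝ × ℝ), A ≠ B →
      ((∃ X ∈ ({A, B} : Finset (ℝ × ℝ)), ∃ Y ∈ ({A, B} : Finset (ℝ × ℝ)),
        X ≠ Y ∧ SepLine X Y R S) ↔ SepLine A B R S) := by
    intro A B R S hAB
    constructor
    · rintro ⟨X, hX, Y, hY, hXY, hsep⟩
      simp only [Finset.mem_insert, Finset.mem_singleton] at hX hY
      rcases hX with h1 | h1 <;> rcases hY with h2 | h2 <;> rw [h1, h2] at hXY hsep
      · exact absurd rfl hXY
      · exact hsep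
      · exact (sepLine_comm A B R S).mp hsep
      · exact absurd rfl hXY
    · intro h
      exact ⟨A, by simp, B, by simp, hAB, h⟩
  intro R hR S hS hRS
  obtain ⟨hRC, hRpq⟩ := Finset.mem_sdiff.mp hR
  obtain ⟨hSC, hSpq⟩ := Finset.mem_sdiff.mp hS
  simp only [Finset.mem_insert, Finset.mem_singleton, not_or] at hRpq hSpq
  obtain ⟨hRP, hRQ⟩ := hRpq
  obtain ⟨hSP, hSQ⟩ := hSpq
  -- the line through P and Q does not separate R from S
  have hPQnosep : ¬ SepLine P Q R S := by
    intro hsep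
    unfold SepLine at hsep
    -- notation: a = [PRS], b = [QRS], c = [PQR], e = [PQS]
    have hab : 0 < det2 (R - P) (S - P) * det2 (R - Q) (S - Q) := by
      have := hpos R hR S hS hRS
      have e1 : det2 (S - R) (P - R) = det2 (R - P) (S - P) := by simp [det2]; ring
      have e2 : det2 (S - R) (Q - R) = det2 (R - Q) (S - Q) := by simp [det2]; ring
      rwa [e1, e2] at this
    have ha0 : det2 (R - P) (S - P) ≠ 0 := hdet P hP R hRC S hSC (Ne.symm hRP) (Ne.symm hSP) hRS
    have hb0 : det2 (R - Q) (S - Q) ≠ 0 := hdet Q hQ R hRC S hSC (Ne.symm hRQ) (Ne.symm hSQ) hRS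
    have hc0 : det2 (Q - P) (R - P) ≠ 0 := hdet P hP Q hQ R hRC hPQ (Ne.symm hRP) (Ne.symm hRQ)
    have he0 : det2 (Q - P) (S - P) ≠ 0 := hdet P hP Q hQ S hSC hPQ (Ne.symm hSP) (Ne.symm hSQ)
    set a := det2 (R - P) (S - P) with hadef
    set b := det2 (R - Q) (S - Q) with hbdef
    set c := det2 (Q - P) (R - P) with hcdef
    set e := det2 (Q - P) (S - P) with hedef
    have hsum1 : b + e + (-c) = a := by rw [hadef, hbdef, hcdef, hedef]; simp [det2]; ring
    have hbar1a : a * Q.1 = b * P.1 + e * R.1 + (-c) * S.1 := by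
      rw [hadef, hbdef, hcdef, hedef]; simp [det2]; ring
    have hbar2a : a * Q.2 = b * P.2 + e * R.2 + (-c) * S.2 := by
      rw [hadef, hbdef, hcdef, hedef]; simp [det2]; ring
    have hbar1b : b * P.1 = a * Q.1 + (-e) * R.1 + c * S.1 := by
      rw [hadef, hbdef, hcdef, hedef]; simp [det2]; ring
    have hbar2b : b * P.2 = a * Q.2 + (-e) * R.2 + c * S.2 := by
      rw [hadef, hbdef, hcdef, hedef]; simp [det2]; ring
    have hsub1 : ({P, R, S} : Set (ℝ × ℝ)) ⊆ (↑C : Set (ℝ × ℝ)) \ {Q} := by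
      intro z hz
      simp only [Set.mem_insert_iff, Set.mem_singleton_iff] at hz
      rcases hz with rfl | rfl | rfl
      · exact ⟨hP, by simp [hPQ]⟩
      · exact ⟨hRC, by simp [hRQ]⟩
      · exact ⟨hSC, by simp [hSQ]⟩
    have hsub2 : ({Q, R, S} : Set (ℝ × ℝ)) ⊆ (↑C : Set (ℝ × ℝ)) \ {P} := by
      intro z hz
      simp only [Set.mem_insert_iff, Set.mem_singleton_iff] at hz
      rcases hz with rfl | rfl | rfl
      · exact ⟨hQ, by simp [Ne.symm hPQ]⟩
      · exact ⟨hRC, by simp [hRP]⟩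
      · exact ⟨hSC, by simp [hSP]⟩
    rcases lt_trichotomy (e * a) 0 with hea | hea | hea
    · -- P ∈ hull {Q, R, S}
      apply hPhull
      apply convexHull_mono hsub2
      rcases lt_or_gt_of_ne hb0 with hb | hb
      · -- b < 0 : a < 0, e > 0, c < 0; coefficients (-a, e, -c), sum -b
        have ha : a < 0 := by nlinarith
        have he : 0 < e := by nlinarith
        have hc : c < 0 := by nlinarith
        have hco : -a + e + -c = -b := by linarith [hsum1]
        apply mem_hull3 P Q R S (-a) e (-c) (by linarith) (by linarith) (by linarith)
        · rw [hco]; linarith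
        · rw [hco]; linarith [hbar1b]
        · rw [hco]; linarith [hbar2b]
      · -- b > 0 : a > 0, e < 0, c > 0; coefficients (a, -e, c), sum b
        have ha : 0 < a := by nlinarith
        have he : e < 0 := by nlinarith
        have hc : 0 < c := by nlinarith
        have hco : a + -e + c = b := by linarith [hsum1]
        apply mem_hull3 P Q R S a (-e) c (by linarith) (by linarith) (by linarith)
        · rw [hco]; linarith
        · rw [hco]; linarith [hbar1b]
        · rw [hco]; linarith [hbar2b]
    · exact absurd hea (mul_ne_zero he0 ha0)
    · -- Q ∈ hull {P, R, S}
      apply hQhull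
      apply convexHull_mono hsub1
      rcases lt_or_gt_of_ne ha0 with ha | ha
      · -- a < 0 : b < 0, e < 0, c > 0; coefficients (-b, -e, c), sum -a
        have hb : b < 0 := by nlinarith
        have he : e < 0 := by nlinarith
        have hc : 0 < c := by nlinarith
        have hco : -b + -e + c = -a := by linarith [hsum1]
        apply mem_hull3 Q P R S (-b) (-e) c (by linarith) (by linarith) (by linarith)
        · rw [hco]; linarith
        · rw [hco]; linarith [hbar1a]
        · rw [hco]; linarith [hbar2a]
      · -- a > 0 : b > 0, e > 0, c < 0; coefficients (b, e, -c), sum a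
        have hb : 0 < b := by nlinarith
        have he : 0 < e := by nlinarith
        have hc : c < 0 := by nlinarith
        apply mem_hull3 Q P R S b e (-c) (by linarith) (by linarith) (by linarith)
        · rw [hsum1]; linarith
        · rw [hsum1]; linarith [hbar1a]
        · rw [hsum1]; linarith [hbar2a]
  -- symmetric role of P and Q for lines through one extra point
  have hPQiff : ∀ x ∈ (C \ ({P, Q} : Finset (ℝ × ℝ))) \ ({R, S} : Finset (ℝ × ℝ)),
      (SepLine P x R S ↔ SepLine Q x R S) := by
    intro x hx
    obtain ⟨hxD, hxrs⟩ := Finset.mem_sdiff.mp hx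
    simp only [Finset.mem_insert, Finset.mem_singleton, not_or] at hxrs
    obtain ⟨hxR, hxS⟩ := hxrs
    have h1 := hpos x hxD R hR hxR
    have h2 := hpos x hxD S hS hxS
    have e1 : det2 (R - x) (P - x) = det2 (x - P) (R - P) := by simp [det2]; ring
    have e2 : det2 (R - x) (Q - x) = det2 (x - Q) (R - Q) := by simp [det2]; ring
    have e3 : det2 (S - x) (P - x) = det2 (x - P) (S - P) := by simp [det2]; ring
    have e4 : det2 (S - x) (Q - x) = det2 (x - Q) (S - Q) := by simp [det2]; ring
    rw [e1, e2] at h1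
    rw [e3, e4] at h2
    unfold SepLine
    exact cross_sign _ _ _ _ h1 h2
  -- counting
  have hPE : P ∉ (C \ ({P, Q} : Finset (ℝ × ℝ))) \ ({R, S} : Finset (ℝ × ℝ)) := by simp
  have hQE : Q ∉ (C \ ({P, Q} : Finset (ℝ × ℝ))) \ ({R, S} : Finset (ℝ × ℝ)) := by simp
  have hPQE : P ∉ insert Q ((C \ ({P, Q} : Finset (ℝ × ℝ))) \ ({R, S} : Finset (ℝ × ℝ))) := by
    simp [hPQ]
  have hT : C \ ({R, S} : Finset (ℝ × ℝ)) =
      insert P (insert Q ((C \ ({P, Q} : Finset (ℝ × ℝ))) \ ({R, S} : Finset (ℝ × ℝ)))) := by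
    ext x
    simp only [Finset.mem_sdiff, Finset.mem_insert, Finset.mem_singleton, not_or]
    constructor
    · rintro ⟨hx, hx1, hx2⟩
      by_cases h1 : x = P
      · exact Or.inl h1
      by_cases h2 : x = Q
      · exact Or.inr (Or.inl h2)
      exact Or.inr (Or.inr ⟨⟨hx, h1, h2⟩, hx1, hx2⟩)
    · rintro (rfl | rfl | ⟨⟨hx, _, _⟩, hx1, hx2⟩)
      · exact ⟨hP, fun h => hRP h.symm, fun h => hSP h.symm⟩
      · exact ⟨hQ, fun h => hRQ h.symm, fun h => hSQ h.symm⟩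
      · exact ⟨hx, hx1, hx2⟩
  have hxQ : ∀ x ∈ (C \ ({P, Q} : Finset (ℝ × ℝ))) \ ({R, S} : Finset (ℝ × ℝ)), x ≠ Q := by
    intro x hx
    have := (Finset.mem_sdiff.mp ((Finset.mem_sdiff.mp hx).1)).2
    simp only [Finset.mem_insert, Finset.mem_singleton, not_or] at this
    exact this.2
  have hxP : ∀ x ∈ (C \ ({P, Q} : Finset (ℝ × ℝ))) \ ({R, S} : Finset (ℝ × ℝ)), x ≠ P := by
    intro x hx
    have := (Finset.mem_sdiff.mp ((Finset.mem_sdiff.mp hx).1)).2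
    simp only [Finset.mem_insert, Finset.mem_singleton, not_or] at this
    exact this.1
  have hdecomp : nsep C R S = nsep (C \ ({P, Q} : Finset (ℝ × ℝ))) R S
      + (((C \ ({P, Q} : Finset (ℝ × ℝ))) \ ({R, S} : Finset (ℝ × ℝ))).filter
          (fun x => SepLine Q x R S)).card
      + (((C \ ({P, Q} : Finset (ℝ × ℝ))) \ ({R, S} : Finset (ℝ × ℝ))).filter
          (fun x => SepLine P x R S)).card := by
    set E := (C \ ({P, Q} : Finset (ℝ × ℝ))) \ ({R, S} : Finset (ℝ × ℝ)) with hEdef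
    unfold nsep
    rw [hT]
    rw [show (2:ℕ) = Nat.succ 1 from rfl]
    rw [Finset.powersetCard_succ_insert hPQE 1, Finset.powersetCard_succ_insert hQE 1]
    rw [Finset.filter_union, Finset.filter_union]
    -- disjointness
    have hmem2 : ∀ s ∈ E.powersetCard (Nat.succ 1), P ∉ s ∧ Q ∉ s := by
      intro s hs
      have hsub := (Finset.mem_powersetCard.mp hs).1
      exact ⟨fun h => hPE (hsub h), fun h => hQE (hsub h)⟩
    have hmemQ : ∀ s ∈ (E.powersetCard 1).image (insert Q), Q ∈ s ∧ P ∉ s := by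
      intro s hs
      obtain ⟨u, hu, rfl⟩ := Finset.mem_image.mp hs
      have husub := (Finset.mem_powersetCard.mp hu).1
      refine ⟨Finset.mem_insert_self _ _, ?_⟩
      intro h
      rcases Finset.mem_insert.mp h with h | h
      · exact hPQ h
      · exact hPE (husub h)
    have hmemP : ∀ s ∈ ((insert Q E).powersetCard 1).image (insert P), P ∈ s := by
      intro s hs
      obtain ⟨u, hu, rfl⟩ := Finset.mem_image.mp hs
      exact Finset.mem_insert_self _ _
    have hd1 : Disjoint ((E.powersetCard (Nat.succ 1)).filter (fun s => ∃ A ∈ s, ∃ B ∈ s, A ≠ B ∧ SepLine A B R S))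
        (((E.powersetCard 1).image (insert Q)).filter (fun s => ∃ A ∈ s, ∃ B ∈ s, A ≠ B ∧ SepLine A B R S)) := by
      rw [Finset.disjoint_left]
      intro s hs1 hs2
      exact (hmem2 s (Finset.mem_filter.mp hs1).1).2 (hmemQ s (Finset.mem_filter.mp hs2).1).1
    have hd2 : Disjoint ((E.powersetCard (Nat.succ 1)).filter (fun s => ∃ A ∈ s, ∃ B ∈ s, A ≠ B ∧ SepLine A B R S)
          ∪ ((E.powersetCard 1).image (insert Q)).filter (fun s => ∃ A ∈ s, ∃ B ∈ s, A ≠ B ∧ SepLine A B R S))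
        ((((insert Q E).powersetCard 1).image (insert P)).filter (fun s => ∃ A ∈ s, ∃ B ∈ s, A ≠ B ∧ SepLine A B R S)) := by
      rw [Finset.disjoint_left]
      intro s hs1 hs2
      have hPs := hmemP s (Finset.mem_filter.mp hs2).1
      rcases Finset.mem_union.mp hs1 with h | h
      · exact (hmem2 s (Finset.mem_filter.mp h).1).1 hPs
      · exact (hmemQ s (Finset.mem_filter.mp h).1).2 hPs
    rw [Finset.card_union_of_disjoint hd2, Finset.card_union_of_disjoint hd1]
    -- the Q part
    have hcQ : (((E.powersetCard 1).image (insert Q)).filter (fun s => ∃ A ∈ s, ∃ B ∈ s, A ≠ B ∧ SepLine A B R S)).card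
        = (E.filter (fun x => SepLine Q x R S)).card := by
      rw [Finset.powersetCard_one, Finset.map_eq_image, Finset.image_image, Finset.filter_image]
      rw [Finset.card_image_of_injOn ?hinj]
      case hinj =>
        intro x hx y hy h
        simp only [Finset.coe_filter, Set.mem_setOf_eq] at hx hy
        simp only [Function.comp_apply, Function.Embedding.coeFn_mk] at h
        have hxm : x ∈ insert Q ({y} : Finset (ℝ × ℝ)) := by rw [← h]; simp
        rcases Finset.mem_insert.mp hxm with h' | h'
        · exact absurd h' (hxQ x hx.1)
        · simpa using h'
      congr 1
      apply Finset.filter_congr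
      intro x hx
      simp only [Function.comp_apply, Function.Embedding.coeFn_mk]
      have := hpairpred Q x R S (Ne.symm (hxQ x hx))
      simpa using this
    -- the P part
    have hcP : (((((insert Q E).powersetCard 1)).image (insert P)).filter (fun s => ∃ A ∈ s, ∃ B ∈ s, A ≠ B ∧ SepLine A B R S)).card
        = (E.filter (fun x => SepLine P x R S)).card := by
      rw [Finset.powersetCard_one, Finset.map_eq_image, Finset.image_image]
      simp only [Function.comp, Function.Embedding.coeFn_mk]
      rw [Finset.image_insert]
      have hnotPQ : ¬ (∃ A ∈ insert P ({Q} : Finset (ℝ × ℝ)),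
          ∃ B ∈ insert P ({Q} : Finset (ℝ × ℝ)), A ≠ B ∧ SepLine A B R S) := by
        intro hpr
        exact hPQnosep ((hpairpred P Q R S hPQ).mp hpr)
      rw [Finset.filter_insert]
      simp only [Function.comp_apply]
      rw [if_neg hnotPQ]
      rw [Finset.filter_image]
      rw [Finset.card_image_of_injOn ?hinj]
      case hinj =>
        intro x hx y hy h
        simp only [Finset.coe_filter, Set.mem_setOf_eq] at hx hy
        simp only [Function.comp_apply] at h
        have hxm : x ∈ insert P ({y} : Finset (ℝ × ℝ)) := by rw [← h]; simp
        rcases Finset.mem_insert.mp hxm with h' | h'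
        · exact absurd h' (hxP x hx.1)
        · simpa using h'
      congr 1
      apply Finset.filter_congr
      intro x hx
      simp only [Function.comp_apply, Function.Embedding.coeFn_mk]
      have := hpairpred P x R S (Ne.symm (hxP x hx))
      simpa using this
    rw [hcQ, hcP]
  -- final parity computation
  have hsubPQ : ({P, Q} : Finset (ℝ × ℝ)) ⊆ C := by
    intro z hz
    simp only [Finset.mem_insert, Finset.mem_singleton] at hz
    rcases hz with rfl | rfl
    · exact hP
    · exact hQ
  have hcard2 : ({P, Q} : Finset (ℝ × ℝ)).card = 2 := by
    rw [Finset.card_insert_of_notMem (by simpa using hPQ), Finset.card_singleton]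
  have hle : 2 ≤ C.card := hcard2 ▸ Finset.card_le_card hsubPQ
  have hcardD : (C \ ({P, Q} : Finset (ℝ × ℝ))).card = C.card - 2 := by
    rw [Finset.card_sdiff_of_subset hsubPQ, hcard2]
  have hsame : (((C \ ({P, Q} : Finset (ℝ × ℝ))) \ ({R, S} : Finset (ℝ × ℝ))).filter
      (fun x => SepLine P x R S)).card
      = (((C \ ({P, Q} : Finset (ℝ × ℝ))) \ ({R, S} : Finset (ℝ × ℝ))).filter
      (fun x => SepLine Q x R S)).card := by
    congr 1
    exact Finset.filter_congr hPQiff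
  have hm := hmono R hRC S hSC hRS
  unfold Orchard at hm ⊢
  rw [hcardD]
  unfold Int.ModEq at hm ⊢
  omega
end
end
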